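/- arXiv:1211.6293 — 7 statements merged into one kernel-verified Lean document; each statement's English description precedes it below -/
import Mathlib

section
/- Let G be a finite group and let σ, τ be elements of G lying in the same conjugacy class and satisfying (στ)² = (τσ)². Assume the centralizer of σ in G is cyclic of order equal to the order of σ, and that the order of σ is prime. Then σ and τ commute, or the element στ has order 2. -/
theorem commute_or_order_two_of_centralizer_cyclic_prime {G : Type*} [Group G] [Finite G]
    (σ τ : G) (hconj : IsConj σ τ) (hsq : (σ * τ) ^ 2 = (τ * σ) ^ 2)
    (hcyc : IsCyclic (Subgroup.centralizer ({σ} : Set G)))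
    (hcard : Nat.card (Subgroup.centralizer ({σ} : Set G)) = orderOf σ)
    (hprime : (orderOf σ).Prime) :
    Commute σ τ ∨ orderOf (σ * τ) = 2 := by
  set C := Subgroup.centralizer ({σ} : Set G) with hC
  have hσC : σ ∈ C := Subgroup.mem_centralizer_iff.mpr (by rintro x rfl; rfl)
  have hzle : Subgroup.zpowers σ ≤ C := Subgroup.zpowers_le.mpr hσC
  have hzeq : Subgroup.zpowers σ = C := by
    apply Subgroup.eq_of_le_of_card_ge hzle
    rw [Nat.card_zpowers, hcard]
  -- (στ)² commutes with σ
  have hcomm : (σ * τ) ^ 2 * σ = σ * (σ * τ) ^ 2 := by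
    have h1 : (σ * τ) ^ 2 * σ = σ * (τ * σ) ^ 2 := by
      simp [pow_two, mul_assoc]
    rw [h1, ← hsq]
  have hmem : (σ * τ) ^ 2 ∈ C :=
    Subgroup.mem_centralizer_iff.mpr (by rintro x rfl; exact hcomm.symm)
  rw [← hzeq] at hmem
  obtain ⟨k, hk⟩ := hmem
  simp only at hk
  -- τ commutes with σ^k
  have hτk : Commute τ (σ ^ k) := by
    have h2 : (τ * σ) ^ 2 = τ * (σ * τ) ^ 2 * τ⁻¹ := by
      simp [pow_two, mul_assoc]
    have h3 : σ ^ k = τ * σ ^ k * τ⁻¹ := by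
      conv_lhs => rw [hk, hsq, h2, ← hk]
    have : σ ^ k * τ = τ * σ ^ k := by
      conv_lhs => rw [h3]
      simp [mul_assoc]
    exact this.symm
  by_cases h1 : σ ^ k = 1
  · -- (στ)² = 1
    have hsq1 : (σ * τ) ^ 2 = 1 := by rw [← hk, h1]
    by_cases h2 : σ * τ = 1
    · left
      rw [mul_eq_one_iff_eq_inv.mp h2]
      exact (Commute.refl τ).inv_left
    · right
      haveI : Fact (Nat.Prime 2) := ⟨Nat.prime_two⟩
      exact orderOf_eq_prime hsq1 h2
  · -- σ^k ≠ 1, so σ ∈ zpowers (σ^k), hence τ commutes with σ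
    left
    have hdvd : orderOf (σ ^ k) ∣ orderOf σ := by
      apply orderOf_dvd_of_pow_eq_one
      rw [← zpow_natCast, ← zpow_mul, mul_comm, zpow_mul, zpow_natCast,
        pow_orderOf_eq_one, one_zpow]
    have hord : orderOf (σ ^ k) = orderOf σ := by
      rcases (Nat.Prime.eq_one_or_self_of_dvd hprime _ hdvd) with h | h
      · exact absurd (orderOf_eq_one_iff.mp h) h1
      · exact h
    have hle : Subgroup.zpowers (σ ^ k) ≤ Subgroup.zpowers σ :=
      Subgroup.zpowers_le.mpr ⟨k, rfl⟩
    have heq : Subgroup.zpowers (σ ^ k) = Subgroup.zpowers σ := by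
      apply Subgroup.eq_of_le_of_card_ge hle
      rw [Nat.card_zpowers, Nat.card_zpowers, hord]
    have hσmem : σ ∈ Subgroup.zpowers (σ ^ k) := heq ▸ Subgroup.mem_zpowers σ
    obtain ⟨m, hm⟩ := hσmem
    have : Commute τ σ := by rw [← hm]; exact hτk.zpow_right m
    exact this.symm
end

section
/- Let G be a finite group, p an odd prime, and 𝒪 a conjugacy class of G all of whose elements have order p. Assume: (a) the centralizer in G of an element of 𝒪 has order p; (b) there is a subgroup H of G and two distinct conjugacy classes 𝒪₁, 𝒪₂ of H with 𝒪₁ ⊆ 𝒪 and 𝒪₂ ⊆ 𝒪; and (c) for some σ ∈ 𝒪₁ there exists τ ∈ 𝒪₂ such that the order of στ is not 1, not 2, and not p. Then 𝒪 is of type D, i.e. there exist σ, τ ∈ 𝒪 with (στ)² ≠ (τσ)² and σ, τ not conjugate in ⟨σ, τ⟩. -/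
/-- A subset `O` of a group (e.g. a conjugacy class) is *of type D* if it contains
elements `σ`, `τ` with `(στ)² ≠ (τσ)²` that are not conjugate in `⟨σ, τ⟩`. -/
def IsTypeD {G : Type*} [Group G] (O : Set G) : Prop :=
  ∃ σ ∈ O, ∃ τ ∈ O,
    (σ * τ) ^ 2 ≠ (τ * σ) ^ 2 ∧
    ¬ ∃ x ∈ Subgroup.closure ({σ, τ} : Set G), x * σ * x⁻¹ = τ

/-- If `c` and `d` are conjugate by an element of `H`, their `H`-conjugacy classes agree. -/
lemma subgroupClass_eq {G : Type*} [Group G] (H : Subgroup G) {c d : G}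
    (h : ∃ x ∈ H, x * c * x⁻¹ = d) :
    {y | ∃ h ∈ H, h * c * h⁻¹ = y} = {y | ∃ h ∈ H, h * d * h⁻¹ = y} := by
  obtain ⟨x, hx, rfl⟩ := h
  ext y
  constructor
  · rintro ⟨h, hh, rfl⟩
    exact ⟨h * x⁻¹, H.mul_mem hh (H.inv_mem hx), by simp [mul_assoc]⟩
  · rintro ⟨h, hh, rfl⟩
    exact ⟨h * x, H.mul_mem hh hx, by simp [mul_assoc]⟩

theorem typeD_of_two_subgroup_classes {G : Type*} [Group G] [Finite G]
    (p : ℕ) (hp : p.Prime) (hodd : Odd p)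
    (O : Set G) (g : G) (hO : O = {x | IsConj g x})
    (horder : ∀ x ∈ O, orderOf x = p)
    (hcent : ∀ x ∈ O, Nat.card (Subgroup.centralizer ({x} : Set G)) = p)
    (H : Subgroup G) (a b : G) (ha : a ∈ H) (hb : b ∈ H)
    (O₁ O₂ : Set G)
    (hO₁ : O₁ = {x | ∃ h ∈ H, h * a * h⁻¹ = x})
    (hO₂ : O₂ = {x | ∃ h ∈ H, h * b * h⁻¹ = x})
    (hne : O₁ ≠ O₂) (hsub₁ : O₁ ⊆ O) (hsub₂ : O₂ ⊆ O)
    (hord : ∃ σ ∈ O₁, ∃ τ ∈ O₂,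
      orderOf (σ * τ) ≠ 1 ∧ orderOf (σ * τ) ≠ 2 ∧ orderOf (σ * τ) ≠ p) :
    IsTypeD O := by
  obtain ⟨σ, hσ₁, τ, hτ₂, h1, h2, hpord⟩ := hord
  have hσO : σ ∈ O := hsub₁ hσ₁
  have hτO : τ ∈ O := hsub₂ hτ₂
  -- the centralizer of any element of O is its cyclic group of powers
  have hcentz : ∀ x ∈ O, Subgroup.zpowers x = Subgroup.centralizer ({x} : Set G) := by
    intro x hx
    apply Subgroup.eq_of_le_of_card_ge
    · intro y hy
      obtain ⟨n, rfl⟩ := hy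
      exact Subgroup.mem_centralizer_singleton_iff.mpr ((Commute.refl x).zpow_left n)
    · rw [hcent x hx, Nat.card_zpowers, horder x hx]
  refine ⟨σ, hσO, τ, hτO, ?_, ?_⟩
  · -- (στ)² ≠ (τσ)²
    intro heq
    have c1 : (σ * τ) ^ 2 ∈ Subgroup.centralizer ({σ} : Set G) := by
      rw [Subgroup.mem_centralizer_singleton_iff]
      calc (σ * τ) ^ 2 * σ = σ * (τ * σ) ^ 2 := by simp [pow_two, mul_assoc]
        _ = σ * (σ * τ) ^ 2 := by rw [heq]
    have c2 : (σ * τ) ^ 2 ∈ Subgroup.centralizer ({τ} : Set G) := by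
      rw [Subgroup.mem_centralizer_singleton_iff]
      calc (σ * τ) ^ 2 * τ = (τ * σ) ^ 2 * τ := by rw [heq]
        _ = τ * (σ * τ) ^ 2 := by simp [pow_two, mul_assoc]
    rw [← hcentz σ hσO] at c1
    rw [← hcentz τ hτO] at c2
    by_cases hk : (σ * τ) ^ 2 = 1
    · -- then orderOf (σ*τ) divides 2, contradiction
      have := orderOf_dvd_of_pow_eq_one hk
      rcases (Nat.dvd_prime Nat.prime_two).mp this with h | h
      · exact h1 h
      · exact h2 h
    · set k := (σ * τ) ^ 2 with hkdef
      have hkord : orderOf k = p := by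
        have hle : Subgroup.zpowers k ≤ Subgroup.zpowers σ := Subgroup.zpowers_le.mpr c1
        have hdvd : orderOf k ∣ p := by
          have := Subgroup.card_dvd_of_le hle
          rwa [Nat.card_zpowers, Nat.card_zpowers, horder σ hσO] at this
        rcases (Nat.dvd_prime hp).mp hdvd with h | h
        · exact absurd (orderOf_eq_one_iff.mp h) hk
        · exact h
      have e1 : Subgroup.zpowers k = Subgroup.zpowers σ := by
        apply Subgroup.eq_of_le_of_card_ge (Subgroup.zpowers_le.mpr c1)
        rw [Nat.card_zpowers, Nat.card_zpowers, horder σ hσO, hkord]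
      have e2 : Subgroup.zpowers k = Subgroup.zpowers τ := by
        apply Subgroup.eq_of_le_of_card_ge (Subgroup.zpowers_le.mpr c2)
        rw [Nat.card_zpowers, Nat.card_zpowers, horder τ hτO, hkord]
      have hστ : σ ∈ Subgroup.zpowers τ := by
        rw [← e2, e1]; exact Subgroup.mem_zpowers σ
      obtain ⟨n, hn⟩ := hστ
      have hcomm : Commute σ τ := hn ▸ (Commute.refl τ).zpow_left n
      have hpow : (σ * τ) ^ p = 1 := by
        rw [hcomm.mul_pow]
        have hσp : σ ^ p = 1 := by rw [← horder σ hσO]; exact pow_orderOf_eq_one σ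
        have hτp : τ ^ p = 1 := by rw [← horder τ hτO]; exact pow_orderOf_eq_one τ
        rw [hσp, hτp, one_mul]
      have := orderOf_dvd_of_pow_eq_one hpow
      rcases (Nat.dvd_prime hp).mp this with h | h
      · exact h1 h
      · exact hpord h
  · -- σ and τ not conjugate in ⟨σ, τ⟩
    rintro ⟨x, hx, hconj⟩
    have hσH : σ ∈ H := by
      rw [hO₁] at hσ₁
      obtain ⟨h, hh, rfl⟩ := hσ₁
      exact H.mul_mem (H.mul_mem hh ha) (H.inv_mem hh)
    have hτH : τ ∈ H := by
      rw [hO₂] at hτ₂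
      obtain ⟨h, hh, rfl⟩ := hτ₂
      exact H.mul_mem (H.mul_mem hh hb) (H.inv_mem hh)
    have hxH : x ∈ H := (Subgroup.closure_le H).mpr
      (by rintro y (rfl | rfl) <;> assumption) hx
    apply hne
    have haσ : ∃ y ∈ H, y * a * y⁻¹ = σ := by rw [hO₁] at hσ₁; exact hσ₁
    have hbτ : ∃ y ∈ H, y * b * y⁻¹ = τ := by rw [hO₂] at hτ₂; exact hτ₂
    calc O₁ = {y | ∃ h ∈ H, h * a * h⁻¹ = y} := hO₁
      _ = {y | ∃ h ∈ H, h * σ * h⁻¹ = y} := subgroupClass_eq H haσ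
      _ = {y | ∃ h ∈ H, h * τ * h⁻¹ = y} := subgroupClass_eq H ⟨x, hxH, hconj⟩
      _ = {y | ∃ h ∈ H, h * b * h⁻¹ = y} := (subgroupClass_eq H hbτ).symm
      _ = O₂ := hO₂.symm
end

section
/- Let p be an odd prime, let σ be a p-cycle in the alternating group A_p on p letters, and let ℓ be an integer with 1 ≤ ℓ ≤ p − 1. Then σ^ℓ is conjugate to σ in A_p if and only if ℓ is a quadratic residue modulo p (i.e. the Legendre symbol of ℓ modulo p equals 1). -/
open Equiv Equiv.Perm Subgroup

/-- Zolotarev: the sign of multiplication by a unit `u` on `ZMod p` is `1` iff `u` is a square. -/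
lemma sign_smulPerm_eq_one_iff (p : ℕ) [Fact p.Prime] (hodd : Odd p) (u : (ZMod p)ˣ) :
    Equiv.Perm.sign (MulAction.toPermHom (ZMod p)ˣ (ZMod p) u) = 1 ↔ IsSquare u := by
  have hp : p.Prime := Fact.out
  have hp2 : p ≠ 2 := by rintro rfl; exact (by decide : ¬ Odd 2) hodd
  have hp3 : 3 ≤ p := by have := hp.two_le; omega
  have hp1even : Even (p - 1) := Nat.Odd.sub_odd hodd odd_one
  obtain ⟨g, hg⟩ := IsCyclic.exists_generator (α := (ZMod p)ˣ)
  have horder : orderOf g = p - 1 := by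
    rw [orderOf_eq_card_of_forall_mem_zpowers hg, Nat.card_eq_fintype_card, ZMod.card_units]
  have hg1 : g ≠ 1 := by
    rintro rfl
    rw [orderOf_one] at horder
    omega
  set φ := MulAction.toPermHom (ZMod p)ˣ (ZMod p) with hφ
  have happly : ∀ (v : (ZMod p)ˣ) (x : ZMod p), φ v x = (v : ZMod p) * x := fun v x => rfl
  have hfix : ∀ (x : ZMod p), φ g x = x ↔ x = 0 := by
    intro x
    constructor
    · intro h
      by_contra hx
      rw [happly] at h
      exact hg1 (Units.ext (mul_right_cancel₀ hx (h.trans (one_mul x).symm)))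
    · rintro rfl; rw [happly, mul_zero]
  -- φ g is a cycle with support of cardinality p - 1
  have hcyc : (φ g).IsCycle := by
    refine ⟨1, ?_, ?_⟩
    · rw [Ne, hfix]; exact one_ne_zero
    · intro y hy
      have hy0 : y ≠ 0 := fun h => hy ((hfix y).mpr h)
      obtain ⟨k, hk⟩ := Subgroup.mem_zpowers_iff.mp (hg (isUnit_iff_ne_zero.mpr hy0).unit)
      refine ⟨k, ?_⟩
      rw [← map_zpow φ g k, happly, mul_one, hk, IsUnit.unit_spec]
  have hsupport : (φ g).support = {(0 : ZMod p)}ᶜ := by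
    ext x
    rw [Equiv.Perm.mem_support, Finset.mem_compl, Finset.mem_singleton, not_iff_not, hfix]
  have hcard : (φ g).support.card = p - 1 := by
    rw [hsupport, Finset.card_compl, Finset.card_singleton, ZMod.card]
  have hsign : Equiv.Perm.sign (φ g) = -1 := by
    rw [hcyc.sign, hcard, hp1even.neg_one_pow]
  -- write u as a power of g
  obtain ⟨n, rfl⟩ : ∃ n : ℕ, g ^ n = u := by
    have := (mem_powers_iff_mem_zpowers (x := g) (y := u)).mpr (hg u)
    exact Submonoid.mem_powers_iff u g |>.mp this
  have hlhs : Equiv.Perm.sign (φ (g ^ n)) = (-1 : ℤˣ) ^ n := by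
    rw [map_pow, map_pow, hsign]
  rw [hlhs]
  have h1 : ((-1 : ℤˣ)) ^ n = 1 ↔ Even n := by
    constructor
    · intro h
      by_contra hodd'
      rw [Nat.not_even_iff_odd] at hodd'
      rw [hodd'.neg_one_pow] at h
      exact (by decide : (-1 : ℤˣ) ≠ 1) h
    · exact Even.neg_one_pow
  have h2 : IsSquare (g ^ n) ↔ Even n := by
    constructor
    · rintro ⟨v, hv⟩
      obtain ⟨m, rfl⟩ : ∃ m : ℕ, g ^ m = v := by
        have := (mem_powers_iff_mem_zpowers (x := g) (y := v)).mpr (hg v)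
        exact Submonoid.mem_powers_iff v g |>.mp this
      rw [← pow_add] at hv
      have hmod : n ≡ m + m [MOD p - 1] := by
        rw [← horder]; exact pow_eq_pow_iff_modEq.mp hv
      have hdvd : ((p - 1 : ℕ) : ℤ) ∣ (m + m : ℕ) - (n : ℤ) := hmod.dvd
      have h2dvd : (2 : ℤ) ∣ ((m + m : ℕ) : ℤ) - (n : ℤ) :=
        dvd_trans (b := ((p - 1 : ℕ) : ℤ)) (by exact_mod_cast hp1even.two_dvd) hdvd
      have : Even ((n : ℤ)) := by
        have hmm : Even (((m + m : ℕ) : ℤ)) := by push_cast; exact ⟨m, rfl⟩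
        have hsub : Even (((m + m : ℕ) : ℤ) - (n : ℤ)) :=
          (even_iff_two_dvd).mpr h2dvd
        exact (Int.even_sub.mp hsub).mp hmm
      exact Int.even_coe_nat n |>.mp this
    · rintro ⟨m, rfl⟩
      exact ⟨g ^ m, pow_add g m m⟩
  rw [h1, h2]

/-- The sign of any permutation conjugating a full-support `p`-cycle `g` to `g ^ ℓ`
is `1` iff `ℓ` is a square mod `p`. -/
lemma sign_conjugator_eq_one_iff (p : ℕ) [Fact p.Prime] (hodd : Odd p)
    (g : Equiv.Perm (Fin p)) (hcyc : g.IsCycle) (hsupp : g.support.card = p)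
    (ℓ : ℕ) (hco : Nat.Coprime ℓ p) (π : Equiv.Perm (Fin p))
    (hπ : π * g * π⁻¹ = g ^ ℓ) :
    Equiv.Perm.sign π = 1 ↔ IsSquare ((ℓ : ZMod p)) := by
  have hp : p.Prime := Fact.out
  have horder : orderOf g = p := hcyc.orderOf.trans hsupp
  have hsupuniv : g.support = Finset.univ :=
    (Finset.card_eq_iff_eq_univ _).mp (by rw [hsupp, Fintype.card_fin])
  have hsign_g : Equiv.Perm.sign g = 1 := by
    rw [hcyc.sign, hsupp, hodd.neg_one_pow, neg_neg]
  set a : Fin p := ⟨0, hp.pos⟩ with ha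
  set f : ZMod p → Fin p := fun k => (g ^ k.val) a with hf
  have hstep : ∀ k : ZMod p, f (k + 1) = g (f k) := by
    intro k
    have hval : (k + 1).val = (k.val + 1) % p := by
      rw [ZMod.val_add, ZMod.val_one]
    simp only [hf]
    have hpow : g ^ ((k.val + 1) % p) = g ^ (k.val + 1) := by
      have h := pow_mod_orderOf g (k.val + 1)
      rwa [horder] at h
    rw [hval, hpow, pow_succ', Equiv.Perm.mul_apply]
  have hkey : ∀ (n : ℕ) (k : ZMod p), f (k + (n : ZMod p)) = (g ^ n) (f k) := by
    intro n
    induction n with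
    | zero => intro k; simp
    | succ n ih =>
      intro k
      have : k + ((n + 1 : ℕ) : ZMod p) = (k + (n : ZMod p)) + 1 := by push_cast; ring
      rw [this, hstep, ih, pow_succ', Equiv.Perm.mul_apply]
  have hinj : Function.Injective f := by
    intro k k' h
    by_contra hne
    set n : ℕ := (k' - k).val with hn
    have hn0 : n ≠ 0 := by
      intro h0
      exact hne (by have := (ZMod.val_eq_zero (k' - k)).mp h0; rwa [sub_eq_zero, eq_comm] at this)
    have hnp : n < p := ZMod.val_lt _
    have hfix : (g ^ n) (f k) = f k := by
      have : k + ((n : ℕ) : ZMod p) = k' := by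
        rw [hn, ZMod.natCast_val, ZMod.cast_id]; ring_nf
      rw [← hkey, this, h]
    have hcop : Nat.Coprime n p :=
      (hp.coprime_iff_not_dvd.mpr (Nat.not_dvd_of_pos_of_lt (Nat.pos_of_ne_zero hn0) hnp)).symm
    have hsup : (g ^ n).support = g.support := by
      apply Equiv.Perm.support_pow_coprime
      rw [horder]; exact hcop
    have : f k ∈ (g ^ n).support := by rw [hsup, hsupuniv]; exact Finset.mem_univ _
    exact (Equiv.Perm.mem_support.mp this) hfix
  have hbij : Function.Bijective f :=
    (Fintype.bijective_iff_injective_and_card f).mpr ⟨hinj, by rw [ZMod.card, Fintype.card_fin]⟩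
  set e : ZMod p ≃ Fin p := Equiv.ofBijective f hbij with he
  have heapp : ∀ k, e k = f k := fun k => rfl
  set u : (ZMod p)ˣ := ZMod.unitOfCoprime ℓ hco with hu
  have hucoe : (u : ZMod p) = (ℓ : ZMod p) := ZMod.coe_unitOfCoprime ℓ hco
  set π₀ : Equiv.Perm (Fin p) :=
    (e.symm.trans (MulAction.toPermHom (ZMod p)ˣ (ZMod p) u)).trans e with hπ₀def
  have hπ₀app : ∀ k : ZMod p, π₀ (e k) = e ((u : ZMod p) * k) := by
    intro k
    simp only [hπ₀def, Equiv.trans_apply, Equiv.symm_apply_apply]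
    rfl
  have hπ₀conj : π₀ * g * π₀⁻¹ = g ^ ℓ := by
    rw [mul_inv_eq_iff_eq_mul]
    ext x
    obtain ⟨k, rfl⟩ : ∃ k, e k = x := ⟨e.symm x, e.apply_symm_apply x⟩
    rw [Equiv.Perm.mul_apply, Equiv.Perm.mul_apply]
    have h1 : g (e k) = e (k + 1) := by rw [heapp, heapp, hstep]
    rw [h1, hπ₀app, hπ₀app, heapp, heapp, ← hkey]
    congr 1
    rw [hucoe]
    ring_nf
  have hsignπ₀ : Equiv.Perm.sign π₀ =
      Equiv.Perm.sign (MulAction.toPermHom (ZMod p)ˣ (ZMod p) u) := by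
    rw [hπ₀def]
    exact Equiv.Perm.sign_symm_trans_trans _ e
  -- π and π₀ differ by an element of the centralizer of g, which consists of powers of g
  have hcomm : Commute (π₀⁻¹ * π) g := by
    have h2 : π * g * π⁻¹ = π₀ * g * π₀⁻¹ := hπ.trans hπ₀conj.symm
    have h3 : (π₀⁻¹ * π) * g * (π₀⁻¹ * π)⁻¹ = g := by
      calc (π₀⁻¹ * π) * g * (π₀⁻¹ * π)⁻¹ = π₀⁻¹ * (π * g * π⁻¹) * π₀ := by group
        _ = π₀⁻¹ * (π₀ * g * π₀⁻¹) * π₀ := by rw [h2]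
        _ = g := by group
    exact mul_inv_eq_iff_eq_mul.mp h3
  have hsignc : Equiv.Perm.sign (π₀⁻¹ * π) = 1 := by
    obtain ⟨hc', hmem⟩ := hcyc.commute_iff.mp hcomm
    have hofs : Equiv.Perm.ofSubtype ((π₀⁻¹ * π).subtypePerm hc') = π₀⁻¹ * π :=
      Equiv.ext fun x => Equiv.Perm.ofSubtype_subtypePerm_of_mem hc'
        (by rw [hsupuniv]; exact Finset.mem_univ x)
    rw [hofs] at hmem
    obtain ⟨m, hm⟩ := Subgroup.mem_zpowers_iff.mp hmem
    rw [← hm, map_zpow, hsign_g, one_zpow]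
  have hπeq : π = π₀ * (π₀⁻¹ * π) := by group
  rw [hπeq, map_mul, hsignc, mul_one, hsignπ₀]
  rw [sign_smulPerm_eq_one_iff p hodd u]
  constructor
  · intro hsq
    rw [← hucoe]
    exact hsq.map (Units.coeHom (ZMod p))
  · rintro ⟨r, hr⟩
    have hr0 : r ≠ 0 := by
      intro h0
      rw [h0, mul_zero, ← hucoe] at hr
      exact u.ne_zero hr
    refine ⟨(isUnit_iff_ne_zero.mpr hr0).unit, Units.ext ?_⟩
    push_cast
    rw [IsUnit.unit_spec, hucoe, hr]

theorem pCycle_pow_conj_iff_isSquare (p : ℕ) (hp : p.Prime) (hodd : Odd p)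
    (σ : alternatingGroup (Fin p))
    (hcyc : (σ : Equiv.Perm (Fin p)).IsCycle)
    (hsupp : (σ : Equiv.Perm (Fin p)).support.card = p)
    (ℓ : ℕ) (hℓ1 : 1 ≤ ℓ) (hℓp : ℓ ≤ p - 1) :
    IsConj σ (σ ^ ℓ) ↔ IsSquare (ℓ : ZMod p) := by
  haveI := Fact.mk hp
  have hℓlt : ℓ < p := by have := hp.two_le; omega
  have hco : Nat.Coprime ℓ p :=
    (hp.coprime_iff_not_dvd.mpr (Nat.not_dvd_of_pos_of_lt hℓ1 hℓlt)).symm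
  set g : Equiv.Perm (Fin p) := (σ : Equiv.Perm (Fin p)) with hg
  have horder : orderOf g = p := hcyc.orderOf.trans hsupp
  constructor
  · intro h
    obtain ⟨c, hc⟩ := isConj_iff.mp h
    have hc' : (c : Equiv.Perm (Fin p)) * g * (c : Equiv.Perm (Fin p))⁻¹ = g ^ ℓ := by
      have := congrArg (fun x : alternatingGroup (Fin p) => (x : Equiv.Perm (Fin p))) hc
      simpa using this
    have hsc : Equiv.Perm.sign (c : Equiv.Perm (Fin p)) = 1 :=
      Equiv.Perm.mem_alternatingGroup.mp c.2
    exact (sign_conjugator_eq_one_iff p hodd g hcyc hsupp ℓ hco _ hc').mp hsc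
  · intro h
    have hcop' : Nat.Coprime ℓ (orderOf g) := by rwa [horder]
    have hcycℓ : (g ^ ℓ).IsCycle := hcyc.pow_iff.mpr hcop'
    have hsuppℓ : (g ^ ℓ).support = g.support := Equiv.Perm.support_pow_coprime hcop'
    have hconj : IsConj g (g ^ ℓ) := hcyc.isConj hcycℓ (by rw [hsuppℓ])
    obtain ⟨π, hπ⟩ := isConj_iff.mp hconj
    have hsπ : Equiv.Perm.sign π = 1 :=
      (sign_conjugator_eq_one_iff p hodd g hcyc hsupp ℓ hco π hπ).mpr h
    have hmem : π ∈ alternatingGroup (Fin p) := Equiv.Perm.mem_alternatingGroup.mpr hsπ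
    refine isConj_iff.mpr ⟨⟨π, hmem⟩, ?_⟩
    apply Subtype.ext
    simpa using hπ
end

section
/- Let p be a prime with p ≥ 5, let σ be a p-cycle in the alternating group A_p on p letters, and let 𝒪 be the conjugacy class of σ in A_p. Then: (i) every element τ ∈ 𝒪 that commutes with σ lies in the cyclic subgroup ⟨σ⟩; and (ii) the set 𝒪 ∩ ⟨σ⟩ has exactly (p − 1)/2 elements. -/
/-!
The centralizer of a full cycle `σ` in `Perm α` is `⟨σ⟩`. This gives (i), and since `σ` is even it
also shows that all permutations conjugating `σ` to a given `σ ^ k` have the same sign. Labelling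
the points by `ZMod p` so that `σ` becomes `x ↦ x + 1`, multiplication by a unit `k` conjugates
`σ` to `σ ^ k`; so `σ ^ k` is conjugate to `σ` in `A_p` iff `x ↦ k * x` is even. This sign is a
character of `(ZMod p)ˣ`, and it is nontrivial because a generator acts as a `(p - 1)`-cycle,
so its kernel has `(p - 1) / 2` elements.
-/

open Equiv Equiv.Perm Finset

section OrderOf

variable {G : Type*} {x : G} {n : ℕ}

theorem pow_natCast_val_of_orderOf_eq [Monoid G] (hx : orderOf x = n) (m : ℕ) :
    x ^ (m : ZMod n).val = x ^ m := by
  rw [ZMod.val_natCast, ← hx, pow_mod_orderOf]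

theorem pow_val_injective_of_orderOf_eq [LeftCancelMonoid G] [NeZero n] (hx : orderOf x = n) :
    Function.Injective fun i : ZMod n => x ^ i.val := by
  intro i j hij
  simp only [pow_inj_mod, hx, Nat.mod_eq_of_lt (ZMod.val_lt _)] at hij
  exact ZMod.val_injective n hij

end OrderOf

namespace Equiv.Perm

variable {α : Type*} [Fintype α] [DecidableEq α] {c g π π' : Perm α}

theorem IsCycle.mem_zpowers_of_commute (hc : c.IsCycle) (hfull : c.support = univ)
    (h : Commute g c) : g ∈ Subgroup.zpowers c := by
  obtain ⟨_, hmem⟩ := hc.commute_iff.mp h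
  rwa [ofSubtype_subtypePerm _ fun x _ => hfull ▸ mem_univ x] at hmem

theorem IsCycle.sign_eq_of_conj_eq (hc : c.IsCycle) (hfull : c.support = univ)
    (heven : Perm.sign c = 1) (h : π * c * π⁻¹ = π' * c * π'⁻¹) :
    Perm.sign π = Perm.sign π' := by
  have hcomm : Commute (π'⁻¹ * π) c := by
    rw [commute_iff_eq, ← mul_inv_eq_iff_eq_mul]
    calc π'⁻¹ * π * c * (π'⁻¹ * π)⁻¹ = π'⁻¹ * (π * c * π⁻¹) * π' := by group
      _ = c := by rw [h]; group
  obtain ⟨k, hk⟩ := hc.mem_zpowers_of_commute hfull hcomm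
  have hsign : Perm.sign (π'⁻¹ * π) = 1 := by rw [← hk, map_zpow, heven, one_zpow]
  rwa [map_mul, map_inv, inv_mul_eq_one, eq_comm] at hsign

theorem IsCycle.odd_card_support_of_sign_eq_one (hc : c.IsCycle) (heven : Perm.sign c = 1) :
    Odd #c.support := by
  by_contra hodd
  rw [hc.sign, (Nat.not_odd_iff_even.mp hodd).neg_one_pow] at heven
  exact absurd heven (by decide)

theorem IsCycle.exists_equiv_zmod_permCongr_addRight_one (hc : c.IsCycle)
    (hfull : c.support = univ) :
    ∃ e : ZMod (Fintype.card α) ≃ α, e.permCongr (Equiv.addRight 1) = c := by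
  set n := Fintype.card α
  have horder : orderOf c = n := by rw [hc.orderOf, hfull, card_univ]
  have : NeZero n := ⟨by rw [← horder]; exact (orderOf_pos c).ne'⟩
  obtain ⟨a, -⟩ := hc.nonempty_support
  let f : ZMod n → α := fun i => (c ^ i.val) a
  have hf_succ (i : ZMod n) : c (f i) = f (i + 1) := by
    have : i + 1 = ((i.val + 1 : ℕ) : ZMod n) := by push_cast; rw [ZMod.natCast_zmod_val]
    simp only [f, this, pow_natCast_val_of_orderOf_eq horder, pow_succ', Perm.mul_apply]
  have hf_inj : Function.Injective f := by
    intro i j hij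
    refine pow_val_injective_of_orderOf_eq horder (hc.pow_eq_pow_iff.mpr ⟨a, ?_, hij⟩)
    simp [← mem_support, hfull]
  have hf_bij : Function.Bijective f :=
    (Fintype.bijective_iff_injective_and_card f).mpr ⟨hf_inj, ZMod.card n⟩
  refine ⟨Equiv.ofBijective f hf_bij, ?_⟩
  ext x
  obtain ⟨i, rfl⟩ := hf_bij.surjective x
  simp [permCongr_apply, hf_succ]

end Equiv.Perm

namespace ZMod

theorem toPerm_mul_addRight_one_mul_inv {n : ℕ} [NeZero n] (u : (ZMod n)ˣ) :
    MulAction.toPerm u * Equiv.addRight 1 * (MulAction.toPerm u)⁻¹ =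
      Equiv.addRight (1 : ZMod n) ^ (u : ZMod n).val := by
  ext x
  simp [Units.smul_def]

variable (n : ℕ) [NeZero n] in
/-- By Zolotarev's lemma this is the Legendre symbol when `n` is an odd prime. -/
def unitsMulSign : (ZMod n)ˣ →* ℤˣ :=
  Perm.sign.comp (MulAction.toPermHom (ZMod n)ˣ (ZMod n))

variable {p : ℕ} [Fact p.Prime]

theorem unitsMulSign_eq_neg_one_of_generator (hp2 : p ≠ 2) {g : (ZMod p)ˣ}
    (hg : ∀ x, x ∈ Subgroup.zpowers g) : unitsMulSign p g = -1 := by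
  have hg1 : (g : ZMod p) ≠ 1 := by
    intro h
    have : Fact (2 < p) := ⟨(Fact.out : p.Prime).two_le.lt_of_ne' hp2⟩
    obtain ⟨k, hk⟩ := hg (-1)
    simp only [show g = 1 from Units.ext h, one_zpow] at hk
    exact ZMod.neg_one_ne_one (by simpa using congrArg Units.val hk.symm)
  have hfix (x : ZMod p) : (g : ZMod p) * x = x ↔ x = 0 := by
    rw [← sub_eq_zero, ← sub_one_mul, mul_eq_zero, sub_eq_zero, or_iff_right hg1]
  have hsupp : (MulAction.toPerm g : Perm (ZMod p)).support = {0}ᶜ := by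
    ext x
    simp [Units.smul_def, hfix]
  have hcyc : (MulAction.toPerm g : Perm (ZMod p)).IsCycle := by
    refine ⟨1, by simpa [Units.smul_def] using hg1, fun y hy => ?_⟩
    have hy0 : y ≠ 0 := by rwa [← mem_support, hsupp, mem_compl, mem_singleton] at hy
    obtain ⟨k, hk⟩ := hg (Units.mk0 y hy0)
    refine ⟨k, ?_⟩
    simp only at hk
    rw [← MulAction.toPermHom_apply, ← map_zpow, hk]
    simp [Units.smul_def]
  have hodd := (Fact.out : p.Prime).odd_of_ne_two hp2
  rw [unitsMulSign, MonoidHom.comp_apply, MulAction.toPermHom_apply, hcyc.sign, hsupp,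
    card_compl, card_singleton, ZMod.card, (Nat.Odd.sub_odd hodd odd_one).neg_one_pow]

theorem unitsMulSign_surjective (hp2 : p ≠ 2) : Function.Surjective (unitsMulSign p) := by
  obtain ⟨g, hg⟩ := IsCyclic.exists_generator (α := (ZMod p)ˣ)
  intro s
  rcases Int.units_eq_one_or s with rfl | rfl
  · exact ⟨1, map_one _⟩
  · exact ⟨g, unitsMulSign_eq_neg_one_of_generator hp2 hg⟩

theorem card_ker_unitsMulSign (hp2 : p ≠ 2) : Nat.card (unitsMulSign p).ker = (p - 1) / 2 := by
  have hindex : (unitsMulSign p).ker.index = 2 := by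
    rw [Subgroup.index_ker, MonoidHom.range_eq_top.mpr (unitsMulSign_surjective hp2),
      Subgroup.card_top, Nat.card_eq_fintype_card, Fintype.card_units_int]
  have := (unitsMulSign p).ker.card_mul_index
  rw [hindex, Nat.card_eq_fintype_card (α := (ZMod p)ˣ), ZMod.card_units] at this
  omega

end ZMod

namespace alternatingGroup

variable {α : Type*} [Fintype α] [DecidableEq α] {σ : alternatingGroup α}

theorem mem_zpowers_of_commute (hc : (σ : Perm α).IsCycle) (hfull : (σ : Perm α).support = univ)
    {τ : alternatingGroup α} (h : Commute σ τ) : τ ∈ Subgroup.zpowers σ := by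
  have := hc.mem_zpowers_of_commute hfull (h.symm.map (alternatingGroup α).subtype)
  change _ ∈ Subgroup.zpowers ((alternatingGroup α).subtype σ) at this
  rwa [← MonoidHom.map_zpowers, Subgroup.mem_map_iff_mem (Subgroup.subtype_injective _)] at this

theorem isConj_pow_val_iff [Nonempty α] (hc : (σ : Perm α).IsCycle)
    (hfull : (σ : Perm α).support = univ) (k : (ZMod (Fintype.card α))ˣ) :
    IsConj σ (σ ^ (k : ZMod (Fintype.card α)).val) ↔ ZMod.unitsMulSign _ k = 1 := by
  obtain ⟨e, he⟩ := hc.exists_equiv_zmod_permCongr_addRight_one hfull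
  set π := e.permCongr (MulAction.toPerm k)
  have hπ : π * σ * π⁻¹ = (σ : Perm α) ^ (k : ZMod (Fintype.card α)).val := by
    have h := congrArg e.permCongrHom (ZMod.toPerm_mul_addRight_one_mul_inv k)
    rw [map_mul, map_mul, map_inv, map_pow] at h
    rw [← he]
    exact h
  have hsign : Perm.sign π = ZMod.unitsMulSign _ k := sign_permCongr _ _
  rw [isConj_iff]
  constructor
  · rintro ⟨a, ha⟩
    have ha' : (a : Perm α) * σ * (a : Perm α)⁻¹ =
        (σ : Perm α) ^ (k : ZMod (Fintype.card α)).val := by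
      simpa using congrArg Subtype.val ha
    rw [← hsign, hc.sign_eq_of_conj_eq hfull σ.2 (hπ.trans ha'.symm)]
    exact a.2
  · intro h1
    refine ⟨⟨π, by rw [mem_alternatingGroup, hsign, h1]⟩, Subtype.ext ?_⟩
    simpa using hπ

theorem ncard_isConj_inter_zpowers (hp : (Fintype.card α).Prime) (hc : (σ : Perm α).IsCycle)
    (hfull : (σ : Perm α).support = univ) :
    ({x | IsConj σ x} ∩ (Subgroup.zpowers σ : Set (alternatingGroup α))).ncard =
      (Fintype.card α - 1) / 2 := by
  set p := Fintype.card α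
  have : Fact p.Prime := ⟨hp⟩
  have : Nonempty α := Fintype.card_pos_iff.mp hp.pos
  have hp2 : p ≠ 2 := fun h => by
    simpa [hfull, p, h, Nat.odd_iff] using hc.odd_card_support_of_sign_eq_one σ.2
  have horder : orderOf σ = p := by
    rw [← Subgroup.orderOf_coe, hc.orderOf, hfull, card_univ]
  have himage : {x | IsConj σ x} ∩ (Subgroup.zpowers σ : Set (alternatingGroup α)) =
      (fun k : (ZMod p)ˣ => σ ^ (k : ZMod p).val) '' (ZMod.unitsMulSign p).ker := by
    ext x
    constructor
    · rintro ⟨hconj, hzp⟩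
      obtain ⟨m, rfl⟩ := mem_powers_iff_mem_zpowers.mpr hzp
      replace hconj : IsConj σ (σ ^ m) := hconj
      have hm : (m : ZMod p) ≠ 0 := by
        intro h0
        rw [← pow_natCast_val_of_orderOf_eq horder, h0, ZMod.val_zero, pow_zero,
          isConj_one_left] at hconj
        exact hc.ne_one (by rw [hconj]; rfl)
      refine ⟨Units.mk0 _ hm, ?_, pow_natCast_val_of_orderOf_eq horder m⟩
      rw [SetLike.mem_coe, MonoidHom.mem_ker, ← isConj_pow_val_iff hc hfull]
      rwa [Units.val_mk0, pow_natCast_val_of_orderOf_eq horder]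
    · rintro ⟨k, hk, rfl⟩
      exact ⟨(isConj_pow_val_iff hc hfull k).mpr hk, pow_mem (Subgroup.mem_zpowers σ) _⟩
  have hinj : Function.Injective fun k : (ZMod p)ˣ => σ ^ (k : ZMod p).val :=
    (pow_val_injective_of_orderOf_eq horder).comp Units.val_injective
  rw [himage, Set.ncard_image_of_injective _ hinj, ← Nat.card_coe_set_eq, SetLike.coe_sort_coe,
    ZMod.card_ker_unitsMulSign hp2]

end alternatingGroup

theorem maximal_abelian_subrack_of_pCycle_class_general (p : ℕ) (hp : p.Prime)
    (σ : alternatingGroup (Fin p))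
    (hcyc : (σ : Equiv.Perm (Fin p)).IsCycle)
    (hsupp : (σ : Equiv.Perm (Fin p)).support.card = p) :
    (∀ τ ∈ {x : alternatingGroup (Fin p) | IsConj σ x},
        Commute σ τ → τ ∈ Subgroup.zpowers σ) ∧
    Set.ncard ({x : alternatingGroup (Fin p) | IsConj σ x} ∩
        (Subgroup.zpowers σ : Set (alternatingGroup (Fin p)))) = (p - 1) / 2 := by
  have hfull : (σ : Perm (Fin p)).support = univ :=
    eq_univ_of_card _ (by rw [hsupp, Fintype.card_fin])
  refine ⟨fun τ _ hστ => alternatingGroup.mem_zpowers_of_commute hcyc hfull hστ, ?_⟩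
  simpa using alternatingGroup.ncard_isConj_inter_zpowers (by rwa [Fintype.card_fin]) hcyc hfull

theorem maximal_abelian_subrack_of_pCycle_class (p : ℕ) (hp : p.Prime) (hp5 : 5 ≤ p)
    (σ : alternatingGroup (Fin p))
    (hcyc : (σ : Equiv.Perm (Fin p)).IsCycle)
    (hsupp : (σ : Equiv.Perm (Fin p)).support.card = p) :
    (∀ τ ∈ {x : alternatingGroup (Fin p) | IsConj σ x},
        Commute σ τ → τ ∈ Subgroup.zpowers σ) ∧
    Set.ncard ({x : alternatingGroup (Fin p) | IsConj σ x} ∩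
        (Subgroup.zpowers σ : Set (alternatingGroup (Fin p)))) = (p - 1) / 2 :=
  maximal_abelian_subrack_of_pCycle_class_general p hp σ hcyc hsupp
end

section
/- Let r and k be natural numbers with r ≥ 2 and k ≥ 2, and suppose p := (r^k − 1)/(r − 1) is a prime number. Then gcd(k, r − 1) = 1. -/
theorem gcd_eq_one_of_repunit_prime (r k : ℕ) (hr : 2 ≤ r) (hk : 2 ≤ k)
    (p : ℕ) (hp : p = (r ^ k - 1) / (r - 1)) (hpp : p.Prime) :
    Nat.gcd k (r - 1) = 1 := by
  have hr1 : 1 ≤ r := by omega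
  have key : ∀ a b : ℕ, 1 ≤ a → a ≤ b → a - 1 + (b - a) = b - 1 := by intros; omega
  have hmul : ∀ m, (r - 1) * ∑ i ∈ Finset.range m, r ^ i = r ^ m - 1 := by
    intro m
    induction m with
    | zero => simp
    | succ n ih =>
      rw [Finset.sum_range_succ, Nat.mul_add, ih, pow_succ', Nat.sub_mul, one_mul]
      exact key _ _ (Nat.one_le_pow _ _ (by omega))
        (Nat.le_mul_of_pos_left _ (by omega))
  have hps : p = ∑ i ∈ Finset.range k, r ^ i := by
    rw [hp, ← hmul, Nat.mul_div_cancel_left _ (by omega)]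
  set d := Nat.gcd k (r - 1) with hd
  have hdr : d ∣ r - 1 := Nat.gcd_dvd_right _ _
  have hdk : d ∣ k := Nat.gcd_dvd_left _ _
  have hmod : r ≡ 1 [MOD d] := ((Nat.modEq_iff_dvd' hr1).2 hdr).symm
  have hsum : ∀ m, (∑ i ∈ Finset.range m, r ^ i) ≡ m [MOD d] := by
    intro m
    induction m with
    | zero => rfl
    | succ n ih =>
      rw [Finset.sum_range_succ]
      simpa using ih.add (hmod.pow n)
  have hdp : d ∣ p := by
    have : p ≡ 0 [MOD d] := by
      rw [hps]
      exact (hsum k).trans ((Nat.modEq_zero_iff_dvd).2 hdk)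
    exact (Nat.modEq_zero_iff_dvd).1 this
  rcases (Nat.Prime.eq_one_or_self_of_dvd hpp d hdp) with h | h
  · exact h
  · exfalso
    have hpk : r - 1 < p := by
      rw [hps]
      have : 1 + r ≤ ∑ i ∈ Finset.range k, r ^ i := by
        calc 1 + r = ∑ i ∈ Finset.range 2, r ^ i := by
              simp [Finset.sum_range_succ]
          _ ≤ _ := Finset.sum_le_sum_of_subset (Finset.range_subset_range.2 hk)
      omega
    have : d ≤ r - 1 := Nat.le_of_dvd (by omega) hdr
    omega
end

section
/- Let p be an odd prime with p ≥ 5, let H be a subgroup of the alternating group A_p on p letters, and let 𝒪₁ and 𝒪₂ be the two distinct A_p-conjugacy classes of p-cycles. Then the number of H-conjugacy classes of elements of order p that are contained in 𝒪₁ equals the number of H-conjugacy classes of elements of order p that are contained in 𝒪₂. -/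
/-!
Fix `k` with `k ≡ u (mod p)` for a generator `u` of `(ZMod p)ˣ`. Raising to the `k`-th power
commutes with conjugation and is inverted on elements of order `p` by raising to `k⁻¹ mod p`,
so `C ↦ C ^ k` is a bijection between the `H`-classes of elements of order `p` in the
`A_p`-class of `σ` and those in the `A_p`-class of `σ ^ k`. Modelling a `p`-cycle as `x ↦ x + 1`
on `ZMod p`, multiplication by `u` conjugates it to its `k`-th power; as a `(p - 1)`-cycle this
conjugator is odd, so `σ₁ ^ k` lies in the `A_p`-class of `σ₂`, not in that of `σ₁`.
-/

open Equiv Equiv.Perm Finset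

section PowerMap

variable {G : Type*} [Group G]

def subgroupConjClass (H : Subgroup G) (a : G) : Set G :=
  {x | ∃ h ∈ H, h * a * h⁻¹ = x}

def subgroupClassesOfOrderIn (H : Subgroup G) (n : ℕ) (σ : G) : Set (Set G) :=
  {C | (∃ a ∈ H, orderOf a = n ∧ C = subgroupConjClass H a) ∧ C ⊆ {x | IsConj σ x}}

theorem image_pow_subgroupConjClass (H : Subgroup G) (a : G) (k : ℕ) :
    (· ^ k) '' subgroupConjClass H a = subgroupConjClass H (a ^ k) := by
  ext y
  constructor
  · rintro ⟨x, ⟨h, hh, rfl⟩, rfl⟩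
    exact ⟨h, hh, conj_pow.symm⟩
  · rintro ⟨h, hh, rfl⟩
    exact ⟨h * a * h⁻¹, ⟨h, hh, rfl⟩, conj_pow⟩

variable {x σ σ' : G} {n k k' : ℕ}

theorem pow_pow_eq_self_of_mul_modEq_one (hx : orderOf x = n) (hkk' : k * k' ≡ 1 [MOD n]) :
    (x ^ k) ^ k' = x := by
  rw [← pow_mul, ← pow_mod_orderOf, hx, hkk', ← hx, pow_mod_orderOf, pow_one]

theorem orderOf_pow_eq_of_mul_modEq_one (hx : orderOf x = n) (hkk' : k * k' ≡ 1 [MOD n]) :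
    orderOf (x ^ k) = n := by
  refine hx ▸ (orderOf_pow_dvd k).antisymm ?_
  conv_lhs => rw [← pow_pow_eq_self_of_mul_modEq_one hx hkk']
  exact orderOf_pow_dvd k'

theorem image_pow_mem_subgroupClassesOfOrderIn {H : Subgroup G} {C : Set G}
    (hC : C ∈ subgroupClassesOfOrderIn H n σ) (hkk' : k * k' ≡ 1 [MOD n])
    (hσ : IsConj (σ ^ k) σ') :
    (· ^ k) '' C ∈ subgroupClassesOfOrderIn H n σ' := by
  obtain ⟨⟨a, haH, ha, rfl⟩, hCσ⟩ := hC
  refine ⟨⟨a ^ k, pow_mem haH k, orderOf_pow_eq_of_mul_modEq_one ha hkk',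
    image_pow_subgroupConjClass H a k⟩, ?_⟩
  rintro _ ⟨x, hx, rfl⟩
  exact hσ.symm.trans ((hCσ hx).pow k)

theorem image_pow_image_pow_of_mem_subgroupClassesOfOrderIn {H : Subgroup G} {C : Set G}
    (hC : C ∈ subgroupClassesOfOrderIn H n σ) (hkk' : k * k' ≡ 1 [MOD n]) :
    (· ^ k') '' ((· ^ k) '' C) = C := by
  obtain ⟨⟨a, -, ha, rfl⟩, -⟩ := hC
  rw [image_pow_subgroupConjClass, image_pow_subgroupConjClass,
    pow_pow_eq_self_of_mul_modEq_one ha hkk']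

theorem ncard_subgroupClassesOfOrderIn_eq_of_isConj_pow (H : Subgroup G) (hσ : orderOf σ = n)
    (hkk' : k * k' ≡ 1 [MOD n]) (hσσ' : IsConj (σ ^ k) σ') :
    (subgroupClassesOfOrderIn H n σ).ncard = (subgroupClassesOfOrderIn H n σ').ncard := by
  have hk'k : k' * k ≡ 1 [MOD n] := by rwa [mul_comm]
  have hσ'σ : IsConj (σ' ^ k') σ := by
    simpa only [pow_pow_eq_self_of_mul_modEq_one hσ hkk'] using (hσσ'.pow k').symm
  refine Set.BijOn.ncard_eq (f := fun C ↦ (· ^ k) '' C) <|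
    Set.InvOn.bijOn (f' := fun C ↦ (· ^ k') '' C) ⟨fun C hC ↦ ?_, fun C hC ↦ ?_⟩
      (fun C hC ↦ image_pow_mem_subgroupClassesOfOrderIn hC hkk' hσσ')
      (fun C hC ↦ image_pow_mem_subgroupClassesOfOrderIn hC hk'k hσ'σ)
  · exact image_pow_image_pow_of_mem_subgroupClassesOfOrderIn hC hkk'
  · exact image_pow_image_pow_of_mem_subgroupClassesOfOrderIn hC hk'k

end PowerMap

theorem ZMod.isCycle_addLeft_one {n : ℕ} [NeZero n] [Nontrivial (ZMod n)] :
    (Equiv.addLeft (1 : ZMod n)).IsCycle :=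
  ⟨0, by simp, fun y _ ↦ ⟨y.val, by simp⟩⟩

theorem ZMod.support_addLeft_one {n : ℕ} [NeZero n] [Nontrivial (ZMod n)] :
    (Equiv.addLeft (1 : ZMod n)).support = univ := by
  ext
  simp

section GroupWithZero

variable {G₀ : Type*} [GroupWithZero G₀]

theorem Units.support_mulLeft [Fintype G₀] [DecidableEq G₀] {u : G₀ˣ} (hu : u ≠ 1) :
    u.mulLeft.support = {0}ᶜ := by
  ext x
  simp [mul_left_eq_self₀, hu]

theorem Units.isCycle_mulLeft_of_forall_mem_zpowers {u : G₀ˣ} (hu : u ≠ 1)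
    (hgen : ∀ v, v ∈ Subgroup.zpowers u) : u.mulLeft.IsCycle := by
  refine ⟨1, by simpa using hu, fun y hy ↦ ?_⟩
  have hy0 : y ≠ 0 := by rintro rfl; simp at hy
  obtain ⟨i, hi⟩ := Subgroup.mem_zpowers_iff.mp (hgen (Units.mk0 y hy0))
  refine ⟨i, ?_⟩
  change (MulAction.toPermHom G₀ˣ G₀ u ^ i) 1 = y
  rw [← map_zpow, hi]
  simp

theorem Units.sign_mulLeft_of_forall_mem_zpowers [Fintype G₀] [DecidableEq G₀]
    (hodd : Odd (Fintype.card G₀)) {u : G₀ˣ} (hgen : ∀ v, v ∈ Subgroup.zpowers u) :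
    sign u.mulLeft = -1 := by
  have hu : u ≠ 1 := by
    rintro rfl
    have : Fintype.card G₀ˣ = 1 :=
      Fintype.card_eq_one_iff.mpr ⟨1, fun v ↦ by simpa using hgen v⟩
    rw [Fintype.card_units] at this
    rw [show Fintype.card G₀ = 2 by omega] at hodd
    exact absurd hodd (by decide)
  rw [(isCycle_mulLeft_of_forall_mem_zpowers hu hgen).sign, support_mulLeft hu, card_compl,
    card_singleton, (Nat.Odd.sub_odd hodd odd_one).neg_one_pow]

end GroupWithZero

theorem Units.mulLeft_mul_addLeft_mul_inv {R : Type*} [Ring R] (u : Rˣ) (a : R) :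
    u.mulLeft * Equiv.addLeft a * u.mulLeft⁻¹ = Equiv.addLeft (u * a) := by
  ext x
  simp [mul_add]

theorem Equiv.Perm.IsCycle.odd_card_support_of_sign_eq_one_s13 {α : Type*} [Fintype α]
    [DecidableEq α] {σ : Perm α} (hσ : σ.IsCycle) (hsign : Perm.sign σ = 1) : Odd #σ.support := by
  by_contra heven
  rw [hσ.sign, (Nat.not_odd_iff_even.mp heven).neg_one_pow] at hsign
  exact absurd hsign (by decide)

theorem Equiv.Perm.IsCycle.exists_odd_conj_eq_pow {α : Type*} [Fintype α] [DecidableEq α]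
    {p : ℕ} [Fact p.Prime] (hp : Odd p) {σ : Perm α} (hσ : σ.IsCycle) (hσp : #σ.support = p) :
    ∃ k : ℕ, k.Coprime p ∧ ∃ τ : Perm α, Perm.sign τ = -1 ∧ τ * σ * τ⁻¹ = σ ^ k := by
  obtain ⟨u, hu⟩ := IsCyclic.exists_generator (α := (ZMod p)ˣ)
  let f : ZMod p ≃ {x // x ∈ σ.support} :=
    Fintype.equivOfCardEq (by rw [ZMod.card, Fintype.card_coe, hσp])
  have hc : (extendDomainHom f (Equiv.addLeft 1)).IsCycle :=
    ZMod.isCycle_addLeft_one.extendDomain f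
  obtain ⟨g, hg⟩ := _root_.isConj_iff.mp <| hc.isConj hσ <| by
    rw [extendDomainHom_apply, card_support_extend_domain, ZMod.support_addLeft_one, card_univ,
      ZMod.card, hσp]
  let φ := (MulAut.conj g).toMonoidHom.comp (extendDomainHom f)
  refine ⟨(u : ZMod p).val, ZMod.val_coe_unit_coprime u, φ u.mulLeft, ?_, ?_⟩
  · simpa [φ, sign_extendDomain, mul_right_comm, Int.units_mul_self] using
      Units.sign_mulLeft_of_forall_mem_zpowers (by rwa [ZMod.card]) hu
  · have hσφ : σ = φ (Equiv.addLeft 1) := hg.symm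
    rw [hσφ, ← map_inv, ← map_mul, ← map_mul, ← map_pow, Units.mulLeft_mul_addLeft_mul_inv,
      nsmul_addLeft, mul_one, nsmul_eq_mul, mul_one, ZMod.natCast_zmod_val]

theorem alternatingGroup.isConj_of_conj_odd_of_not_isConj {α : Type*} [Fintype α] [DecidableEq α]
    {x y z : alternatingGroup α} {g τ : Perm α} (hxy : ¬IsConj x y) (hg : g * x * g⁻¹ = y)
    (hτ : sign τ = -1) (hz : τ * x * τ⁻¹ = z) : IsConj z y := by
  have hg' : sign g = -1 := by
    refine (Int.units_eq_one_or _).resolve_left fun h ↦ hxy ?_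
    exact isConj_iff.mpr ⟨⟨g, h⟩, Subtype.ext hg⟩
  refine isConj_iff.mpr ⟨⟨g * τ⁻¹, by simp [hg', hτ]⟩, Subtype.ext ?_⟩
  rw [← hg]
  push_cast
  rw [← hz]
  group

theorem card_subgroup_classes_in_two_pCycle_classes_eq_general (p : ℕ) (hp : p.Prime)
    (H : Subgroup (alternatingGroup (Fin p)))
    (σ₁ σ₂ : alternatingGroup (Fin p))
    (hcyc₁ : (σ₁ : Equiv.Perm (Fin p)).IsCycle)
    (hsupp₁ : (σ₁ : Equiv.Perm (Fin p)).support.card = p)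
    (hcyc₂ : (σ₂ : Equiv.Perm (Fin p)).IsCycle)
    (hsupp₂ : (σ₂ : Equiv.Perm (Fin p)).support.card = p)
    (hne : ¬ IsConj σ₁ σ₂) :
    Set.ncard {C : Set (alternatingGroup (Fin p)) |
        (∃ a ∈ H, orderOf a = p ∧ C = {x | ∃ h ∈ H, h * a * h⁻¹ = x}) ∧
        C ⊆ {x | IsConj σ₁ x}} =
    Set.ncard {C : Set (alternatingGroup (Fin p)) |
        (∃ a ∈ H, orderOf a = p ∧ C = {x | ∃ h ∈ H, h * a * h⁻¹ = x}) ∧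
        C ⊆ {x | IsConj σ₂ x}} := by
  show (subgroupClassesOfOrderIn H p σ₁).ncard = (subgroupClassesOfOrderIn H p σ₂).ncard
  have := Fact.mk hp
  have hodd : Odd p :=
    hsupp₁ ▸ hcyc₁.odd_card_support_of_sign_eq_one_s13 (mem_alternatingGroup.mp σ₁.2)
  have horder : orderOf σ₁ = p := by rw [← Subgroup.orderOf_coe, hcyc₁.orderOf, hsupp₁]
  obtain ⟨k, hkp, τ, hτ, hτσ⟩ := hcyc₁.exists_odd_conj_eq_pow hodd hsupp₁
  obtain ⟨g, hg⟩ := isConj_iff.mp (hcyc₁.isConj hcyc₂ (hsupp₁.trans hsupp₂.symm))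
  have hσ₁σ₂ : IsConj (σ₁ ^ k) σ₂ :=
    alternatingGroup.isConj_of_conj_odd_of_not_isConj hne hg hτ (by rw [hτσ, Subgroup.coe_pow])
  obtain ⟨k', -, hkk'⟩ := Nat.exists_mul_mod_eq_one_of_coprime hkp hp.one_lt
  exact ncard_subgroupClassesOfOrderIn_eq_of_isConj_pow H horder
    (by rw [Nat.ModEq, hkk', Nat.mod_eq_of_lt hp.one_lt]) hσ₁σ₂

theorem card_subgroup_classes_in_two_pCycle_classes_eq (p : ℕ) (hp : p.Prime) (hp5 : 5 ≤ p)
    (H : Subgroup (alternatingGroup (Fin p)))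
    (σ₁ σ₂ : alternatingGroup (Fin p))
    (hcyc₁ : (σ₁ : Equiv.Perm (Fin p)).IsCycle)
    (hsupp₁ : (σ₁ : Equiv.Perm (Fin p)).support.card = p)
    (hcyc₂ : (σ₂ : Equiv.Perm (Fin p)).IsCycle)
    (hsupp₂ : (σ₂ : Equiv.Perm (Fin p)).support.card = p)
    (hne : ¬ IsConj σ₁ σ₂) :
    Set.ncard {C : Set (alternatingGroup (Fin p)) |
        (∃ a ∈ H, orderOf a = p ∧ C = {x | ∃ h ∈ H, h * a * h⁻¹ = x}) ∧
        C ⊆ {x | IsConj σ₁ x}} =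
    Set.ncard {C : Set (alternatingGroup (Fin p)) |
        (∃ a ∈ H, orderOf a = p ∧ C = {x | ∃ h ∈ H, h * a * h⁻¹ = x}) ∧
        C ⊆ {x | IsConj σ₂ x}} :=
  card_subgroup_classes_in_two_pCycle_classes_eq_general p hp H σ₁ σ₂ hcyc₁ hsupp₁ hcyc₂ hsupp₂ hne
end

section
/- Let F be a finite field with r elements, let k ≥ 2 be a natural number, and suppose p := (r^k − 1)/(r − 1) is a prime number. Then p divides the order of the special linear group SL_k(F) and p² does not divide the order of SL_k(F); in particular every Sylow p-subgroup of SL_k(F) has order exactly p. -/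
open Matrix

/-- The determinant is surjective on `GL`. -/
lemma det_GL_surjective (F : Type*) [Field F] (k : ℕ) (hk : 0 < k) :
    Function.Surjective (Matrix.GeneralLinearGroup.det : GL (Fin k) F →* Fˣ) := by
  intro a
  haveI : NeZero k := ⟨hk.ne'⟩
  set v : Fin k → F := Function.update (1 : Fin k → F) 0 (a : F) with hv
  set w : Fin k → F := Function.update (1 : Fin k → F) 0 ((a⁻¹ : Fˣ) : F) with hw
  have hvw : v * w = 1 := by
    funext i
    by_cases h : i = 0
    · subst h; simp [hv, hw]
    · simp [hv, hw, Function.update_of_ne h]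
  have hwv : w * v = 1 := by rw [mul_comm] at hvw; exact hvw
  refine ⟨⟨Matrix.diagonal v, Matrix.diagonal w, ?_, ?_⟩, ?_⟩
  · rw [Matrix.diagonal_mul_diagonal]
    have h : (fun i => v i * w i) = (1 : Fin k → F) := hvw
    rw [h]
    exact Matrix.diagonal_one
  · rw [Matrix.diagonal_mul_diagonal]
    have h : (fun i => w i * v i) = (1 : Fin k → F) := hwv
    rw [h]
    exact Matrix.diagonal_one
  · ext
    simp only [Matrix.GeneralLinearGroup.val_det_apply]
    show (Matrix.diagonal v).det = (a : F)
    rw [Matrix.det_diagonal, hv]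
    rw [Finset.prod_eq_single 0]
    · simp
    · intro i _ h; simp [Function.update_of_ne h]
    · simp

/-- `SL` is equivalent to the kernel of the determinant on `GL`. -/
noncomputable def slEquivKer (F : Type*) [Field F] (k : ℕ) :
    Matrix.SpecialLinearGroup (Fin k) F ≃
      (Matrix.GeneralLinearGroup.det : GL (Fin k) F →* Fˣ).ker where
  toFun A := ⟨Matrix.SpecialLinearGroup.toGL A, by
    rw [MonoidHom.mem_ker]; exact Matrix.SpecialLinearGroup.coeToGL_det A⟩
  invFun u := ⟨(u : GL (Fin k) F), by
    have := u.2
    rw [MonoidHom.mem_ker] at this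
    have := congrArg Units.val this
    simpa [Matrix.GeneralLinearGroup.val_det_apply] using this⟩
  left_inv A := rfl
  right_inv u := by
    ext
    rfl

lemma card_GL_eq_card_SL_mul (F : Type*) [Field F] [Fintype F] (k : ℕ) (hk : 0 < k) :
    Nat.card (GL (Fin k) F) =
      Nat.card (Matrix.SpecialLinearGroup (Fin k) F) * (Fintype.card F - 1) := by
  classical
  set f : GL (Fin k) F →* Fˣ := Matrix.GeneralLinearGroup.det
  have h1 : Nat.card (GL (Fin k) F) = Nat.card (GL (Fin k) F ⧸ f.ker) * Nat.card f.ker :=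
    Subgroup.card_eq_card_quotient_mul_card_subgroup f.ker
  have h2 : Nat.card (GL (Fin k) F ⧸ f.ker) = Nat.card Fˣ :=
    Nat.card_congr (QuotientGroup.quotientKerEquivOfSurjective f
      (det_GL_surjective F k hk)).toEquiv
  have h3 : Nat.card f.ker = Nat.card (Matrix.SpecialLinearGroup (Fin k) F) :=
    (Nat.card_congr (slEquivKer F k)).symm
  rw [h1, h2, h3, Nat.card_eq_fintype_card, Fintype.card_units, mul_comm]

theorem sylow_p_of_SL_has_order_p (F : Type*) [Field F] [Fintype F]
    (r k p : ℕ) (hr : Fintype.card F = r) (hk : 2 ≤ k)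
    (hp : p = (r ^ k - 1) / (r - 1)) (hpp : p.Prime) :
    p ∣ Nat.card (Matrix.SpecialLinearGroup (Fin k) F) ∧
    ¬ p ^ 2 ∣ Nat.card (Matrix.SpecialLinearGroup (Fin k) F) ∧
    ∀ P : Sylow p (Matrix.SpecialLinearGroup (Fin k) F),
      Nat.card (P : Subgroup (Matrix.SpecialLinearGroup (Fin k) F)) = p := by
  classical
  have hr2 : 2 ≤ r := hr ▸ Fintype.one_lt_card
  have hk0 : 0 < k := by omega
  -- basic arithmetic facts
  have hdvd1 : r - 1 ∣ r ^ k - 1 := by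
    simpa using Nat.sub_dvd_pow_sub_pow r 1 k
  have hgeom : p * (r - 1) = r ^ k - 1 := by
    rw [hp]; exact Nat.div_mul_cancel hdvd1
  have hrk1 : 1 ≤ r ^ k := Nat.one_le_pow _ _ (by omega)
  have hpdr : p ∣ r ^ k - 1 := hgeom ▸ dvd_mul_right p (r - 1)
  have hpr : ¬ p ∣ r := by
    intro h
    have h1 : p ∣ r ^ k := dvd_pow h hk0.ne'
    have h3 : p ∣ 1 := by
      have := Nat.dvd_sub h1 hpdr
      rwa [Nat.sub_sub_self hrk1] at this
    exact hpp.one_lt.ne' (Nat.dvd_one.mp h3)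
  -- p ≥ r^(k-1)
  have hpk : r ^ (k - 1) ≤ p := by
    have h1 : r ^ (k - 1) * (r - 1) ≤ p * (r - 1) := by
      rw [hgeom, Nat.mul_sub, mul_one, ← pow_succ]
      have : k - 1 + 1 = k := by omega
      rw [this]
      have : 1 ≤ r ^ (k - 1) := Nat.one_le_pow _ _ (by omega)
      omega
    exact Nat.le_of_mul_le_mul_right h1 (by omega)
  have hndvd : ∀ j, 1 ≤ j → j < k → ¬ p ∣ (r ^ j - 1) := by
    intro j hj1 hjk
    have h1 : 2 ≤ r ^ j := by
      calc 2 = 2 ^ 1 := rfl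
        _ ≤ r ^ j := Nat.pow_le_pow_left hr2 1 |>.trans (Nat.pow_le_pow_right (by omega) hj1)
    have h2 : r ^ j ≤ r ^ (k - 1) := Nat.pow_le_pow_right (by omega) (by omega)
    exact Nat.not_dvd_of_pos_of_lt (by omega) (by omega)
  have hpr1 : ¬ p ∣ (r - 1) := by
    have : r ≤ r ^ (k - 1) := by
      calc r = r ^ 1 := (pow_one r).symm
        _ ≤ r ^ (k - 1) := Nat.pow_le_pow_right (by omega) (by omega)
    exact Nat.not_dvd_of_pos_of_lt (by omega) (by omega)
  -- the order of GL
  have hM : Nat.card (GL (Fin k) F) = ∏ i : Fin k, (r ^ k - r ^ (i : ℕ)) := by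
    rw [Matrix.card_GL_field, hr]
  haveI : NeZero k := ⟨hk0.ne'⟩
  set M := ∏ i : Fin k, (r ^ k - r ^ (i : ℕ)) with hMdef
  have h0 : (0 : Fin k) ∈ Finset.univ := Finset.mem_univ _
  have hsplit : M = (r ^ k - 1) * ∏ i ∈ Finset.univ.erase (0 : Fin k), (r ^ k - r ^ (i : ℕ)) := by
    rw [hMdef, ← Finset.mul_prod_erase Finset.univ _ h0]
    simp
  set Q := ∏ i ∈ Finset.univ.erase (0 : Fin k), (r ^ k - r ^ (i : ℕ)) with hQdef
  have hpQ : ¬ p ∣ Q := by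
    intro h
    obtain ⟨i, hi, hdvd⟩ := hpp.prime.exists_mem_finset_dvd h
    have hi0 : (i : ℕ) ≠ 0 := by
      intro h'
      exact (Finset.mem_erase.mp hi).1 (Fin.ext h')
    have hik : (i : ℕ) < k := i.isLt
    have hfact : r ^ k - r ^ (i : ℕ) = r ^ (i : ℕ) * (r ^ (k - (i : ℕ)) - 1) := by
      rw [Nat.mul_sub, mul_one, ← pow_add]
      congr 2
      omega
    rw [hfact] at hdvd
    rcases hpp.prime.dvd_mul.mp hdvd with h' | h'
    · exact hpr (hpp.prime.dvd_of_dvd_pow h')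
    · exact hndvd (k - (i : ℕ)) (by omega) (by omega) h'
  -- p divides M exactly once
  have hpM : p ∣ M := by
    rw [hsplit, ← hgeom]
    exact dvd_mul_of_dvd_left (dvd_mul_right p (r - 1)) Q
  have hp2M : ¬ p ^ 2 ∣ M := by
    intro h
    rw [hsplit, ← hgeom] at h
    have : p * p ∣ p * ((r - 1) * Q) := by
      rw [← mul_assoc]
      simpa [sq] using h
    have hdvd : p ∣ (r - 1) * Q := (mul_dvd_mul_iff_left hpp.pos.ne').mp this
    rcases hpp.prime.dvd_mul.mp hdvd with h' | h'
    · exact hpr1 h'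
    · exact hpQ h'
  -- transfer to SL
  set N := Nat.card (Matrix.SpecialLinearGroup (Fin k) F) with hNdef
  have hMN : M = N * (r - 1) := by
    rw [← hM, card_GL_eq_card_SL_mul F k hk0, hr]
  have hcop : Nat.Coprime p (r - 1) := (Nat.Prime.coprime_iff_not_dvd hpp).mpr hpr1
  have hpN : p ∣ N := by
    rw [hMN] at hpM
    exact hcop.dvd_of_dvd_mul_right hpM
  have hp2N : ¬ p ^ 2 ∣ N := fun h => hp2M (h.trans (hMN ▸ Dvd.intro _ rfl))
  refine ⟨hpN, hp2N, ?_⟩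
  intro P
  haveI : Fact p.Prime := ⟨hpp⟩
  have hNne : N ≠ 0 := Nat.card_pos.ne'
  have h1 : 1 ≤ N.factorization p := by
    rw [← hpp.pow_dvd_iff_le_factorization hNne, pow_one]; exact hpN
  have h2 : ¬ 2 ≤ N.factorization p := by
    rw [← hpp.pow_dvd_iff_le_factorization hNne]; exact hp2N
  have hfact0 : N.factorization p = 1 := by omega
  have hfact1 : (Nat.card (Matrix.SpecialLinearGroup (Fin k) F)).factorization p = 1 := hfact0
  rw [Sylow.card_eq_multiplicity P, hfact1, pow_one]
end
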